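/- arXiv:2307.12787 — 3 statements merged into one kernel-verified Lean document; each statement's English description precedes it below -/
import Mathlib

section
/- Let X be a compactum. A functional I : C(X) → ℝ satisfies (1) I(1_X) = 1; (2) I(ψ ∨ φ) = max(I(ψ), I(φ)) for all comonotone φ, ψ ∈ C(X); (3) I(λ_X + φ) = λ + I(φ) for all λ ∈ ℝ and φ ∈ C(X), if and only if there exists a capacity c on X such that I(φ) = ∫^{∨+}_X φ dc for every φ ∈ C(X), where ∫^{∨+}_X φ dc = max{ln(c(φ_t)) + t : t ∈ ℝ}. -/
/-- An (upper-semicontinuous) capacity on a compactum `X`: a `[0,1]`-valued,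
monotone, normalized set function on closed sets, upper semicontinuous in the
sense that if `ν(F) < a` then there is an open `O ⊇ F` with `ν(B) < a` for every
closed `B ⊆ O`. -/
def IsCapacity {X : Type*} [TopologicalSpace X] (ν : Set X → ℝ) : Prop :=
  ν Set.univ = 1 ∧ ν ∅ = 0 ∧
  (∀ F : Set X, IsClosed F → 0 ≤ ν F ∧ ν F ≤ 1) ∧
  (∀ F G : Set X, IsClosed F → IsClosed G → F ⊆ G → ν F ≤ ν G) ∧
  (∀ (F : Set X) (a : ℝ), IsClosed F → ν F < a →
    ∃ O : Set X, IsOpen O ∧ F ⊆ O ∧ ∀ B : Set X, IsClosed B → B ⊆ O → ν B < a)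

/-- A possibility capacity: a capacity with `ν(A ∪ B) = max(ν(A), ν(B))`
for all closed `A`, `B`. -/
def IsPossibilityCapacity {X : Type*} [TopologicalSpace X] (ν : Set X → ℝ) : Prop :=
  IsCapacity ν ∧
  ∀ A B : Set X, IsClosed A → IsClosed B → ν (A ∪ B) = max (ν A) (ν B)
open Classical in
/-- The exponential `[-∞,0] → [0,1]`, with `exp(-∞) = 0`. -/
noncomputable def myExp (a : EReal) : ℝ :=
  if a = ⊥ then 0 else Real.exp a.toReal

open Classical in
/-- The logarithm `[0,1] → [-∞,0]`, with `ln(0) = -∞`. -/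
noncomputable def myLog (r : ℝ) : EReal :=
  if r ≤ 0 then ⊥ else (Real.log r : EReal)

/-- Two continuous functions are comonotone (equiordered) if
`(φ(x₁) - φ(x₂)) · (ψ(x₁) - ψ(x₂)) ≥ 0` for all `x₁, x₂`. -/
def Comonotone {X : Type*} [TopologicalSpace X] (φ ψ : C(X, ℝ)) : Prop :=
  ∀ x₁ x₂ : X, 0 ≤ (φ x₁ - φ x₂) * (ψ x₁ - ψ x₂)

/-!
The capacity is recovered from `I` as `c(F) = inf {exp I(θ) : θ ≤ 0, θ = 0 near F}`.

If `I` is a max-plus integral, comonotone `φ, ψ` have nested superlevel sets, which makes the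
integral maxitive on them, and adding a constant only shifts the levels.

Conversely, functions that are nondecreasing functions of a fixed `φ` are pairwise comonotone, so
`I` is monotone and maxitive on them. Testing `c(φ_t)` against `min(φ - t + δ, 0)` gives
`ln c(φ_t) + t ≤ I(φ)`. For the reverse inequality, the ramps `min(k(φ - t), 0)` with steep slopes
`k` lie below every `θ` vanishing near `φ_t` in the comonotone sense, and a finite net of levels
produces a `t` with `I(φ) - ε ≤ t + I(ramp)` for all slopes, hence `I(φ) - ε ≤ ln c(φ_t) + t`.
-/

open Set Filter Topology

@[simp] lemma myLog_zero : myLog 0 = ⊥ := by simp [myLog]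

@[simp] lemma myLog_one : myLog 1 = 0 := by simp [myLog]

lemma myLog_add_coe_le {r a t : ℝ} (h : r ≤ Real.exp (a - t)) : myLog r + t ≤ a := by
  by_cases hr : r ≤ 0
  · simp [myLog, hr]
  · have hlog : Real.log r ≤ a - t := (Real.log_le_iff_le_exp (not_le.mp hr)).mpr h
    rw [myLog, if_neg hr, ← EReal.coe_add, EReal.coe_le_coe_iff]
    linarith

lemma coe_le_myLog_add {r a t : ℝ} (h : Real.exp (a - t) ≤ r) : (a : EReal) ≤ myLog r + t := by
  have hr : ¬ r ≤ 0 := fun hr => (Real.exp_pos _).not_ge (h.trans hr)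
  have hlog : a - t ≤ Real.log r := (Real.le_log_iff_exp_le (not_le.mp hr)).mpr h
  rw [myLog, if_neg hr, ← EReal.coe_add, EReal.coe_le_coe_iff]
  linarith

lemma myLog_mono {r s : ℝ} (h : r ≤ s) : myLog r ≤ myLog s := by
  by_cases hr : r ≤ 0
  · simp [myLog, hr]
  · rw [myLog, myLog, if_neg hr, if_neg fun hs => hr (h.trans hs), EReal.coe_le_coe_iff]
    exact Real.log_le_log (not_le.mp hr) h

lemma EReal.iSup_add_coe {ι : Sort*} (f : ι → EReal) (a : ℝ) :
    (⨆ i, f i) + a = ⨆ i, (f i + a) := by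
  refine le_antisymm ?_ (iSup_le fun i => by gcongr; exact le_iSup f i)
  rw [← EReal.le_sub_iff_add_le (by simp) (by simp)]
  exact iSup_le fun i =>
    (EReal.le_sub_iff_add_le (by simp) (by simp)).mpr (le_iSup (fun i => f i + a) i)

section Comonotone

variable {X : Type*} [TopologicalSpace X]

lemma comonotone_iff_monovary {φ ψ : C(X, ℝ)} : Comonotone φ ψ ↔ Monovary φ ψ := by
  rw [monovary_iff_forall_mul_nonneg]
  exact ⟨fun h x y => h y x, fun h x y => h y x⟩

lemma Comonotone.superlevel_subset_or {φ ψ : C(X, ℝ)} (h : Comonotone φ ψ) (t : ℝ) :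
    {x | t ≤ φ x} ⊆ {x | t ≤ ψ x} ∨ {x | t ≤ ψ x} ⊆ {x | t ≤ φ x} := by
  by_contra! hcon
  obtain ⟨x, hφx, hψx⟩ := not_subset.mp hcon.1
  obtain ⟨y, hψy, hφy⟩ := not_subset.mp hcon.2
  simp only [mem_ofPred_eq, not_le] at hφx hψx hψy hφy
  exact absurd ((comonotone_iff_monovary.mp h) (hψx.trans_le hψy)) (hφy.trans_le hφx).not_ge

end Comonotone

def MonotoneAlong {X : Type*} (φ f : X → ℝ) : Prop :=
  ∀ x y, φ x ≤ φ y → f x ≤ f y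

namespace MonotoneAlong

variable {X : Type*} {φ f g : X → ℝ}

lemma self : MonotoneAlong φ φ := fun _ _ h => h

lemma const (c : ℝ) : MonotoneAlong φ fun _ => c := fun _ _ _ => le_rfl

lemma add (hf : MonotoneAlong φ f) (hg : MonotoneAlong φ g) : MonotoneAlong φ (f + g) :=
  fun x y h => add_le_add (hf x y h) (hg x y h)

lemma sup (hf : MonotoneAlong φ f) (hg : MonotoneAlong φ g) : MonotoneAlong φ (f ⊔ g) :=
  fun x y h => sup_le_sup (hf x y h) (hg x y h)

lemma inf (hf : MonotoneAlong φ f) (hg : MonotoneAlong φ g) : MonotoneAlong φ (f ⊓ g) :=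
  fun x y h => inf_le_inf (hf x y h) (hg x y h)

lemma monovary (hf : MonotoneAlong φ f) (hg : MonotoneAlong φ g) : Monovary f g :=
  fun x y hxy => hf x y (not_lt.mp fun h => hxy.not_ge (hg y x h.le))

end MonotoneAlong

lemma MonotoneAlong.comonotone {X : Type*} [TopologicalSpace X] {φ : X → ℝ} {f g : C(X, ℝ)}
    (hf : MonotoneAlong φ f) (hg : MonotoneAlong φ g) : Comonotone f g :=
  comonotone_iff_monovary.mpr (hf.monovary hg)

lemma MonotoneAlong.finset_sup' {X ι : Type*} [TopologicalSpace X] {φ : X → ℝ} {s : Finset ι}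
    (hs : s.Nonempty) {f : ι → C(X, ℝ)} (hf : ∀ i ∈ s, MonotoneAlong φ (f i)) :
    MonotoneAlong φ ⇑(s.sup' hs f) := fun x y h => by
  simp only [ContinuousMap.sup'_apply]
  exact Finset.sup'_mono_fun fun i hi => hf i hi x y h

section MaxPlusIntegral

variable {X : Type*} [TopologicalSpace X] {c : Set X → ℝ}

/-- `∫^{∨+}_X φ dc`, with the maximum over the levels `t` written as a supremum. -/
noncomputable def maxPlusIntegral (c : Set X → ℝ) (φ : C(X, ℝ)) : EReal :=
  ⨆ t : ℝ, myLog (c {x | t ≤ φ x}) + t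

lemma maxPlusIntegral_const (h_univ : c univ = 1) (h_empty : c ∅ = 0) (r : ℝ) :
    maxPlusIntegral c (ContinuousMap.const X r) = r := by
  refine le_antisymm (iSup_le fun t => ?_) (le_iSup_of_le r ?_)
  · by_cases ht : t ≤ r
    · simp [ht, h_univ]
    · simp [ht, h_empty]
  · simp [h_univ]

lemma maxPlusIntegral_sup (hc : ∀ F G, IsClosed F → IsClosed G → F ⊆ G → c F ≤ c G)
    {φ ψ : C(X, ℝ)} (h : Comonotone φ ψ) :
    maxPlusIntegral c (ψ ⊔ φ) = maxPlusIntegral c ψ ⊔ maxPlusIntegral c φ := by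
  rw [maxPlusIntegral, maxPlusIntegral, maxPlusIntegral, ← iSup_sup_eq]
  refine iSup_congr fun t => ?_
  have hφ : IsClosed {x | t ≤ φ x} := isClosed_le continuous_const φ.continuous
  have hψ : IsClosed {x | t ≤ ψ x} := isClosed_le continuous_const ψ.continuous
  have hunion : {x | t ≤ (ψ ⊔ φ) x} = {x | t ≤ ψ x} ∪ {x | t ≤ φ x} := by
    ext x; simp [le_sup_iff]
  rw [hunion]
  rcases h.superlevel_subset_or t with hsub | hsub
  · rw [union_eq_self_of_subset_right hsub, left_eq_sup]
    gcongr; exact myLog_mono (hc _ _ hφ hψ hsub)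
  · rw [union_eq_self_of_subset_left hsub, right_eq_sup]
    gcongr; exact myLog_mono (hc _ _ hψ hφ hsub)

lemma maxPlusIntegral_const_add (l : ℝ) (φ : C(X, ℝ)) :
    maxPlusIntegral c (ContinuousMap.const X l + φ) = maxPlusIntegral c φ + l := by
  rw [maxPlusIntegral, maxPlusIntegral, EReal.iSup_add_coe, ← (Equiv.addRight l).iSup_comp]
  refine iSup_congr fun t => ?_
  simp only [Equiv.coe_addRight, ContinuousMap.add_apply, ContinuousMap.const_apply,
    EReal.coe_add, add_comm l, add_le_add_iff_right, add_assoc]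

end MaxPlusIntegral

structure IsMaxPlusFunctional {X : Type*} [TopologicalSpace X] (I : C(X, ℝ) → ℝ) : Prop where
  map_one : I 1 = 1
  map_sup : ∀ ψ φ : C(X, ℝ), Comonotone φ ψ → I (ψ ⊔ φ) = max (I ψ) (I φ)
  map_const_add : ∀ (l : ℝ) (φ : C(X, ℝ)), I (ContinuousMap.const X l + φ) = l + I φ

lemma IsMaxPlusFunctional.of_eq_maxPlusIntegral {X : Type*} [TopologicalSpace X]
    {I : C(X, ℝ) → ℝ} {c : Set X → ℝ} (hc : IsCapacity c)
    (hI : ∀ φ, (I φ : EReal) = maxPlusIntegral c φ) : IsMaxPlusFunctional I where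
  map_one := by
    have h := hI (ContinuousMap.const X 1)
    rwa [maxPlusIntegral_const hc.1 hc.2.1, EReal.coe_eq_coe_iff] at h
  map_sup ψ φ h := by
    have h' := hI (ψ ⊔ φ)
    rwa [maxPlusIntegral_sup hc.2.2.2.1 h, ← hI, ← hI, ← EReal.coe_strictMono.monotone.map_max,
      EReal.coe_eq_coe_iff] at h'
  map_const_add l φ := by
    have h := hI (ContinuousMap.const X l + φ)
    rw [maxPlusIntegral_const_add, ← hI, ← EReal.coe_add, EReal.coe_eq_coe_iff] at h
    rw [h, add_comm]

namespace IsMaxPlusFunctional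

variable {X : Type*} [TopologicalSpace X] {I : C(X, ℝ) → ℝ}

lemma map_zero (hI : IsMaxPlusFunctional I) : I 0 = 0 := by
  have h := hI.map_const_add 1 0
  rw [add_zero, show ContinuousMap.const X (1 : ℝ) = 1 from rfl, hI.map_one] at h
  linarith

lemma map_const (hI : IsMaxPlusFunctional I) (r : ℝ) : I (ContinuousMap.const X r) = r := by
  simpa [hI.map_zero] using hI.map_const_add r 0

lemma nonempty (hI : IsMaxPlusFunctional I) : Nonempty X := by
  by_contra h
  have h10 : (1 : C(X, ℝ)) = 0 := ContinuousMap.ext fun x => (h ⟨x⟩).elim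
  simpa [h10, hI.map_zero] using hI.map_one

lemma mono_of_comonotone (hI : IsMaxPlusFunctional I) {f g : C(X, ℝ)} (hfg : Comonotone f g)
    (hle : f ≤ g) : I f ≤ I g := by
  have h := hI.map_sup g f hfg
  rw [sup_eq_left.mpr hle] at h
  exact h ▸ le_max_right _ _

lemma map_finset_sup' (hI : IsMaxPlusFunctional I) {φ : X → ℝ} {ι : Type*} {s : Finset ι}
    (hs : s.Nonempty) {f : ι → C(X, ℝ)} (hf : ∀ i ∈ s, MonotoneAlong φ (f i)) :
    I (s.sup' hs f) = s.sup' hs fun i => I (f i) := by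
  induction hs using Finset.Nonempty.cons_induction with
  | singleton i => simp
  | cons a s ha hs ih =>
    have hs' : ∀ i ∈ s, MonotoneAlong φ (f i) := fun i hi => hf i (Finset.mem_cons_of_mem hi)
    rw [Finset.sup'_cons hs, Finset.sup'_cons hs, hI.map_sup _ _
      ((MonotoneAlong.finset_sup' hs hs').comonotone (hf a (Finset.mem_cons_self a s))), ih hs']

end IsMaxPlusFunctional

section InducedCapacity

variable {X : Type*} [TopologicalSpace X] {I : C(X, ℝ) → ℝ} {F G : Set X}

noncomputable def inducedCapacity (I : C(X, ℝ) → ℝ) (F : Set X) : ℝ :=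
  sInf ((fun θ => Real.exp (I θ)) '' {θ | θ ≤ 0 ∧ θ =ᶠ[𝓝ˢ F] 0})

lemma inducedCapacity_le {θ : C(X, ℝ)} (hθ : θ ≤ 0) (hθF : θ =ᶠ[𝓝ˢ F] 0) :
    inducedCapacity I F ≤ Real.exp (I θ) :=
  csInf_le ⟨0, forall_mem_image.2 fun _ _ => (Real.exp_pos _).le⟩ (mem_image_of_mem _ ⟨hθ, hθF⟩)

lemma le_inducedCapacity {r : ℝ} (h : ∀ θ : C(X, ℝ), θ ≤ 0 → θ =ᶠ[𝓝ˢ F] 0 → r ≤ Real.exp (I θ)) :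
    r ≤ inducedCapacity I F :=
  le_csInf ⟨_, mem_image_of_mem _ ⟨le_rfl, EventuallyEq.rfl⟩⟩
    (forall_mem_image.2 fun θ hθ => h θ hθ.1 hθ.2)

lemma inducedCapacity_nonneg : 0 ≤ inducedCapacity I F :=
  le_inducedCapacity fun _ _ _ => (Real.exp_pos _).le

lemma inducedCapacity_mono (hFG : F ⊆ G) : inducedCapacity I F ≤ inducedCapacity I G :=
  le_inducedCapacity fun _ hθ hθG => inducedCapacity_le hθ (hθG.filter_mono (nhdsSet_mono hFG))

lemma exists_isOpen_inducedCapacity_lt {a : ℝ} (h : inducedCapacity I F < a) :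
    ∃ O, IsOpen O ∧ F ⊆ O ∧ ∀ B ⊆ O, inducedCapacity I B < a := by
  obtain ⟨_, ⟨θ, ⟨hθ, hθF⟩, rfl⟩, hlt⟩ :=
    exists_lt_of_csInf_lt (by exact Set.Nonempty.image _ ⟨0, le_rfl, EventuallyEq.rfl⟩) h
  obtain ⟨O, hO, hFO, hθO⟩ := eventually_nhdsSet_iff_exists.mp hθF
  exact ⟨O, hO, hFO, fun B hB =>
    (inducedCapacity_le hθ (eventually_nhdsSet_iff_exists.mpr ⟨O, hO, hB, hθO⟩)).trans_lt hlt⟩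

lemma IsMaxPlusFunctional.inducedCapacity_univ (hI : IsMaxPlusFunctional I) :
    inducedCapacity I univ = 1 := by
  refine le_antisymm ?_ (le_inducedCapacity fun θ _ hθ => ?_)
  · simpa [hI.map_zero] using inducedCapacity_le (I := I) (F := univ) le_rfl EventuallyEq.rfl
  · rw [nhdsSet_univ, eventuallyEq_top] at hθ
    obtain rfl : θ = 0 := by ext x; simpa using congrFun hθ x
    simp [hI.map_zero]

lemma IsMaxPlusFunctional.inducedCapacity_empty (hI : IsMaxPlusFunctional I) :
    inducedCapacity I ∅ = 0 := by
  refine le_antisymm (ge_of_tendsto Real.tendsto_exp_atBot ?_) inducedCapacity_nonneg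
  filter_upwards [eventually_le_atBot 0] with r hr
  simpa [hI.map_const] using
    inducedCapacity_le (I := I) (θ := ContinuousMap.const X r) (fun _ => hr)
      (by rw [nhdsSet_empty]; exact eventually_bot)

lemma IsMaxPlusFunctional.isCapacity_inducedCapacity (hI : IsMaxPlusFunctional I) :
    IsCapacity (inducedCapacity I) :=
  ⟨hI.inducedCapacity_univ, hI.inducedCapacity_empty,
    fun _ _ => ⟨inducedCapacity_nonneg,
      hI.inducedCapacity_univ ▸ inducedCapacity_mono (subset_univ _)⟩,
    fun _ _ _ _ => inducedCapacity_mono, fun _ _ _ h =>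
      let ⟨O, hO, hFO, hB⟩ := exists_isOpen_inducedCapacity_lt h
      ⟨O, hO, hFO, fun B _ => hB B⟩⟩

lemma IsMaxPlusFunctional.inducedCapacity_superlevel_le (hI : IsMaxPlusFunctional I)
    (φ : C(X, ℝ)) (t : ℝ) : inducedCapacity I {x | t ≤ φ x} ≤ Real.exp (I φ - t) := by
  have hδ : ∀ δ ∈ Ioi (0 : ℝ), inducedCapacity I {x | t ≤ φ x} ≤ Real.exp (I φ - t + δ) :=
    fun δ (hδ : 0 < δ) => by
      set θ := (ContinuousMap.const X (δ - t) + φ) ⊓ 0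
      have hθF : θ =ᶠ[𝓝ˢ {x | t ≤ φ x}] 0 := eventually_nhdsSet_iff_exists.2
        ⟨{x | t - δ < φ x}, isOpen_lt continuous_const φ.continuous,
          fun x (hx : t ≤ φ x) => show t - δ < φ x by linarith,
          fun x (hx : t - δ < φ x) => by simp [θ]; linarith⟩
      have hIθ : I θ ≤ δ - t + I φ := by
        rw [← hI.map_const_add]
        exact hI.mono_of_comonotone
          ((((MonotoneAlong.const _).add MonotoneAlong.self).inf (MonotoneAlong.const 0)).comonotone
            ((MonotoneAlong.const _).add MonotoneAlong.self)) inf_le_left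
      exact (inducedCapacity_le inf_le_right hθF).trans (Real.exp_le_exp.2 (by linarith))
  have hlim : Tendsto (fun δ => Real.exp (I φ - t + δ)) (𝓝[>] 0) (𝓝 (Real.exp (I φ - t))) :=
    ((Real.continuous_exp.comp (continuous_const_add _)).tendsto' 0 _ (by simp)).mono_left
      nhdsWithin_le_nhds
  exact ge_of_tendsto hlim (eventually_nhdsWithin_of_forall hδ)

end InducedCapacity

section Ramp

variable {X : Type*} [TopologicalSpace X] (φ : C(X, ℝ)) (t : ℝ) {k k' : ℝ}

noncomputable def ramp (k : ℝ) : C(X, ℝ) := (k • (φ - ContinuousMap.const X t)) ⊓ 0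

lemma ramp_apply (x : X) : ramp φ t k x = min (k * (φ x - t)) 0 := rfl

lemma ramp_nonpos (x : X) : ramp φ t k x ≤ 0 := min_le_right _ _

lemma monotoneAlong_ramp (hk : 0 ≤ k) : MonotoneAlong φ (ramp φ t k) := fun x y h => by
  simp only [ramp_apply]
  gcongr

lemma ramp_antitone (hk : 0 ≤ k) (hkk' : k ≤ k') : ramp φ t k' ≤ ramp φ t k := by
  refine ContinuousMap.le_def.2 fun x => ?_
  simp only [ramp_apply]
  rcases le_total t (φ x) with h | h
  · rw [min_eq_right (by nlinarith), min_eq_right (by nlinarith)]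
  · exact min_le_min (by nlinarith) le_rfl

end Ramp

section Compact

variable {X : Type*} [TopologicalSpace X] [CompactSpace X] {I : C(X, ℝ) → ℝ}

lemma exists_finset_forall_mem_Icc (φ : C(X, ℝ)) {ε : ℝ} (hε : 0 < ε) :
    ∃ s : Finset ℝ, ∀ x, ∃ t ∈ s, φ x ∈ Icc t (t + ε) := by
  obtain ⟨s, hs⟩ := isCompact_univ.elim_finite_subcover (fun t : ℝ => φ ⁻¹' Ioo t (t + ε))
    (fun t => isOpen_Ioo.preimage φ.continuous)
    fun x _ => mem_iUnion.2 ⟨φ x - ε / 2, by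
      simp only [mem_preimage, mem_Ioo]; constructor <;> linarith⟩
  refine ⟨s, fun x => ?_⟩
  obtain ⟨t, ht, hx⟩ := mem_iUnion₂.1 (hs (mem_univ x))
  exact ⟨t, ht, Ioo_subset_Icc_self hx⟩

namespace IsMaxPlusFunctional

/-- Take `t` from a finite `ε`-net of levels of `φ`: if each of them failed for some slope, then
the sup of the steep ramps `t + ramp φ t k` would dominate `φ - ε`, yet have `I` below `I φ - ε`. -/
lemma exists_level_le_add_ramp (hI : IsMaxPlusFunctional I) (φ : C(X, ℝ)) {ε : ℝ} (hε : 0 < ε) :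
    ∃ t : ℝ, ∀ k, 0 ≤ k → I φ - ε ≤ t + I (ramp φ t k) := by
  have := hI.nonempty
  obtain ⟨s, hcover⟩ := exists_finset_forall_mem_Icc φ hε
  have hs : s.Nonempty := let ⟨t, ht, _⟩ := hcover (Classical.arbitrary X); ⟨t, ht⟩
  by_contra! hbad
  have hevent : ∀ᶠ k in atTop, ∀ t ∈ s, t + I (ramp φ t k) < I φ - ε :=
    (s.eventually_all).2 fun t _ => by
      obtain ⟨k₀, hk₀, hlt⟩ := hbad t
      filter_upwards [eventually_ge_atTop k₀] with k hk
      refine lt_of_le_of_lt ?_ hlt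
      gcongr
      exact hI.mono_of_comonotone
        ((monotoneAlong_ramp φ t (hk₀.trans hk)).comonotone (monotoneAlong_ramp φ t hk₀))
        (ramp_antitone φ t hk₀ hk)
  obtain ⟨k, hk, hk0⟩ := (hevent.and (eventually_ge_atTop 0)).exists
  set G := s.sup' hs fun t => ContinuousMap.const X t + ramp φ t k
  have hsteps : ∀ t ∈ s, MonotoneAlong φ (ContinuousMap.const X t + ramp φ t k) :=
    fun t _ => (MonotoneAlong.const t).add (monotoneAlong_ramp φ t hk0)
  have hG : MonotoneAlong φ (ContinuousMap.const X ε + G) :=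
    (MonotoneAlong.const ε).add (MonotoneAlong.finset_sup' hs hsteps)
  have hφG : φ ≤ ContinuousMap.const X ε + G := ContinuousMap.le_def.2 fun x => by
    obtain ⟨t, ht, htx, hxt⟩ := hcover x
    have hGx : t ≤ G x := by
      simp only [G, ContinuousMap.sup'_apply]
      refine le_trans ?_ (Finset.le_sup' (fun t => (ContinuousMap.const X t + ramp φ t k) x) ht)
      simp [ramp_apply, min_eq_right (mul_nonneg hk0 (sub_nonneg.2 htx))]
    simp only [ContinuousMap.add_apply, ContinuousMap.const_apply]
    linarith
  have hIφ := hI.mono_of_comonotone (MonotoneAlong.self.comonotone hG) hφG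
  rw [hI.map_const_add, hI.map_finset_sup' hs hsteps] at hIφ
  simp only [hI.map_const_add] at hIφ
  linarith [(Finset.sup'_lt_iff hs).2 hk]

/-- A steep enough ramp sits below `θ` wherever `θ` is not `0`, i.e. off a neighbourhood of the
superlevel set; clamping it at `-‖θ‖` makes it comonotone with `θ`. -/
lemma exists_ramp_le (hI : IsMaxPlusFunctional I) (φ : C(X, ℝ)) (t : ℝ) {θ : C(X, ℝ)}
    (hθ : θ ≤ 0) (hθF : θ =ᶠ[𝓝ˢ {x | t ≤ φ x}] 0) : ∃ k, 0 ≤ k ∧ I (ramp φ t k) ≤ I θ := by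
  obtain ⟨U, hU, hsub, hθU⟩ := eventually_nhdsSet_iff_exists.mp hθF
  obtain ⟨δ, hδ, hφδ⟩ := hU.isClosed_compl.isCompact.exists_forall_le' (a := 0)
    (f := fun x => t - φ x) (by fun_prop) fun x hx => sub_pos.2 (not_le.1 fun h => hx (hsub h))
  set R := ‖θ‖
  have hθR : ∀ x, -R ≤ θ x := fun x => neg_le_of_abs_le (θ.norm_coe_le_norm x)
  set k := R / δ
  have hk : 0 ≤ k := div_nonneg (norm_nonneg θ) hδ.le
  have hoff : ∀ x ∉ U, ramp φ t k x ≤ -R := fun x hx => by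
    have : k * δ = R := div_mul_cancel₀ R hδ.ne'
    rw [ramp_apply]
    nlinarith [min_le_left (k * (φ x - t)) 0, hφδ x hx]
  set A := ramp φ t k ⊔ ContinuousMap.const X (-R)
  have hramp := monotoneAlong_ramp φ t hk
  have hAθ : A ≤ θ := sup_le (ContinuousMap.le_def.2 fun x => by
      by_cases hx : x ∈ U
      · simpa [hθU x hx] using ramp_nonpos φ t x
      · exact (hoff x hx).trans (hθR x))
    (ContinuousMap.le_def.2 hθR)
  have hAθ_co : Comonotone A θ := comonotone_iff_monovary.2 fun x y hxy => by
    have hx : x ∉ U := fun hx => hxy.not_ge (by simpa [hθU x hx] using hθ y)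
    simp only [A, ContinuousMap.sup_apply, ContinuousMap.const_apply, sup_eq_right.2 (hoff x hx)]
    exact le_sup_right
  refine ⟨k, hk, ?_⟩
  calc I (ramp φ t k) ≤ I A :=
        hI.mono_of_comonotone (hramp.comonotone (hramp.sup (MonotoneAlong.const _))) le_sup_left
    _ ≤ I θ := hI.mono_of_comonotone hAθ_co hAθ

lemma exists_exp_sub_le_inducedCapacity (hI : IsMaxPlusFunctional I) (φ : C(X, ℝ)) {ε : ℝ}
    (hε : 0 < ε) : ∃ t, Real.exp (I φ - ε - t) ≤ inducedCapacity I {x | t ≤ φ x} := by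
  obtain ⟨t, ht⟩ := hI.exists_level_le_add_ramp φ hε
  refine ⟨t, le_inducedCapacity fun θ hθ hθF => ?_⟩
  obtain ⟨k, hk, hle⟩ := hI.exists_ramp_le φ t hθ hθF
  exact Real.exp_le_exp.2 (by linarith [ht k hk])

lemma maxPlusIntegral_inducedCapacity (hI : IsMaxPlusFunctional I) (φ : C(X, ℝ)) :
    maxPlusIntegral (inducedCapacity I) φ = I φ := by
  refine le_antisymm (iSup_le fun t => myLog_add_coe_le (hI.inducedCapacity_superlevel_le φ t))
    (EReal.ge_of_forall_gt_iff_ge.1 fun b hb => ?_)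
  obtain ⟨t, ht⟩ := hI.exists_exp_sub_le_inducedCapacity φ (sub_pos.2 (EReal.coe_lt_coe_iff.1 hb))
  exact le_iSup_of_le t (coe_le_myLog_add (by rwa [sub_sub_cancel] at ht))

end IsMaxPlusFunctional

end Compact

theorem stmt16_general {X : Type*} [TopologicalSpace X] [CompactSpace X]
    (I : C(X, ℝ) → ℝ) :
    (I 1 = 1 ∧
     (∀ ψ φ : C(X, ℝ), Comonotone φ ψ → I (ψ ⊔ φ) = max (I ψ) (I φ)) ∧
     (∀ (l : ℝ) (φ : C(X, ℝ)), I (ContinuousMap.const X l + φ) = l + I φ)) ↔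
    (∃ c : Set X → ℝ, IsCapacity c ∧
      ∀ φ : C(X, ℝ),
        ((I φ : ℝ) : EReal) = ⨆ t : ℝ, (myLog (c {x | t ≤ φ x}) + (t : EReal))) := by
  constructor
  · rintro ⟨h1, h2, h3⟩
    have hI : IsMaxPlusFunctional I := ⟨h1, h2, h3⟩
    exact ⟨inducedCapacity I, hI.isCapacity_inducedCapacity,
      fun φ => (hI.maxPlusIntegral_inducedCapacity φ).symm⟩
  · rintro ⟨c, hc, hrep⟩
    have hI := IsMaxPlusFunctional.of_eq_maxPlusIntegral hc hrep
    exact ⟨hI.map_one, hI.map_sup, hI.map_const_add⟩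

/-- A functional `I : C(X) → ℝ` on a compactum `X` satisfies
(1) `I(1_X) = 1`; (2) `I(ψ ∨ φ) = max(I(ψ), I(φ))` for comonotone `φ, ψ`;
(3) `I(λ_X + φ) = λ + I(φ)`, if and only if there is a capacity `c` on `X`
with `I(φ) = ∫^{∨+} φ dc = max{ln c(φ_t) + t : t ∈ ℝ}` for every `φ ∈ C(X)`
(computed in `ℝ ∪ {-∞}`, `φ_t = {x : φ(x) ≥ t}`). -/
theorem stmt16 {X : Type*} [TopologicalSpace X] [CompactSpace X] [T2Space X]
    (I : C(X, ℝ) → ℝ) :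
    (I 1 = 1 ∧
     (∀ ψ φ : C(X, ℝ), Comonotone φ ψ → I (ψ ⊔ φ) = max (I ψ) (I φ)) ∧
     (∀ (l : ℝ) (φ : C(X, ℝ)), I (ContinuousMap.const X l + φ) = l + I φ)) ↔
    (∃ c : Set X → ℝ, IsCapacity c ∧
      ∀ φ : C(X, ℝ),
        ((I φ : ℝ) : EReal) = ⨆ t : ℝ, (myLog (c {x | t ≤ φ x}) + (t : EReal))) :=
  stmt16_general I
end

section
/- Let X be a compactum. A functional ν : C(X) → ℝ is an idempotent measure on X if and only if there exists a possibility capacity c on X such that ν(φ) = max{φ(x) + ln(c({x})) : x ∈ X} for every φ ∈ C(X) (the maximum computed in ℝ ∪ {-∞} with ln(0) = -∞; it is attained and finite). -/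
/-- An idempotent (Maslov) probability measure on `X`:
a functional on `C(X, ℝ)` preserving constants, translation by constants,
and finite maxima. -/
def IsIdempotentMeasure {X : Type*} [TopologicalSpace X] (μ : C(X, ℝ) → ℝ) : Prop :=
  μ 1 = 1 ∧
  (∀ (l : ℝ) (φ : C(X, ℝ)), μ (ContinuousMap.const X l + φ) = l + μ φ) ∧
  (∀ ψ φ : C(X, ℝ), μ (ψ ⊔ φ) = max (μ ψ) (μ φ))
/-!
The density `d x = inf {ν ψ | ψ x = 0}` of an idempotent measure `ν` satisfies
`φ x + d x ≤ ν φ`. Conversely, if `sup (φ + d) < r < ν φ`, then every point has a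
neighbourhood on which `φ` lies below some `χ` with `ν χ = r`; finitely many of these cover `X`,
and since `ν` is monotone and preserves finite maxima, `ν φ ≤ r`, a contradiction. Being an
infimum of continuous functions, `d` is upper semicontinuous, so the supremum is attained, and
`c F = exp (sup_F d)` is a possibility capacity with `ln c {x} = d x`.

In the other direction, every functional `φ ↦ sup (φ x + L x)` with `sup L = 0` is an idempotent
measure. For `L x = ln c {x}`, the condition `sup L = 0` follows from `c X = 1`: if all `c {x} < a`,
upper semicontinuity and compactness give `c X < a`.
-/

open Set

namespace EReal

lemma coe_add_iSup {ι : Sort*} (l : ℝ) (f : ι → EReal) :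
    (l : EReal) + ⨆ i, f i = ⨆ i, ((l : EReal) + f i) :=
  Monotone.map_iSup_of_continuousAt
    ((EReal.continuousAt_add (.inl (coe_ne_top l)) (.inl (coe_ne_bot l))).comp
      (continuous_const.prodMk continuous_id).continuousAt)
    (fun _ _ h => add_le_add_right h _) (add_bot _)

lemma coe_add_iInf {ι : Sort*} (l : ℝ) (f : ι → EReal) :
    (l : EReal) + ⨅ i, f i = ⨅ i, ((l : EReal) + f i) :=
  Monotone.map_iInf_of_continuousAt
    ((EReal.continuousAt_add (.inl (coe_ne_top l)) (.inl (coe_ne_bot l))).comp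
      (continuous_const.prodMk continuous_id).continuousAt)
    (fun _ _ h => add_le_add_right h _) (add_top_of_ne_bot (coe_ne_bot l))

end EReal

lemma myExp_bot : myExp ⊥ = 0 := by simp [myExp]

lemma myExp_coe (r : ℝ) : myExp r = Real.exp r := by simp [myExp]

lemma myExp_zero : myExp 0 = 1 := by simpa using myExp_coe 0

lemma myExp_nonneg (a : EReal) : 0 ≤ myExp a := by
  unfold myExp; split_ifs <;> positivity

lemma myExp_le_one {a : EReal} (ha : a ≤ 0) : myExp a ≤ 1 := by
  induction a using EReal.rec with
  | bot => simp [myExp_bot]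
  | coe r => rw [myExp_coe]; exact Real.exp_le_one_iff.2 (by exact_mod_cast ha)
  | top => simp at ha

lemma myExp_lt_iff {a : EReal} {t : ℝ} (ha : a ≤ 0) (ht : 0 < t) :
    myExp a < t ↔ a < (Real.log t : EReal) := by
  induction a using EReal.rec with
  | bot => simp [myExp_bot, ht]
  | coe r => rw [myExp_coe, EReal.coe_lt_coe_iff, Real.lt_log_iff_exp_lt ht]
  | top => simp at ha

lemma monotoneOn_myExp : MonotoneOn myExp (Iic 0) := by
  intro a ha b hb hab
  induction b using EReal.rec with
  | bot => rw [le_bot_iff.1 hab]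
  | coe s =>
    by_contra! h
    have h0 : 0 < myExp a := (myExp_nonneg _).trans_lt h
    rw [myExp_lt_iff hb h0] at h
    exact lt_irrefl _ ((myExp_lt_iff ha h0).2 (hab.trans_lt h))
  | top => simp at hb

lemma myLog_myExp {a : EReal} (ha : a ≤ 0) : myLog (myExp a) = a := by
  induction a using EReal.rec with
  | bot => simp [myExp_bot, myLog]
  | coe r => simp [myExp_coe, myLog, (Real.exp_pos r).not_ge]
  | top => simp at ha

lemma myLog_nonpos {r : ℝ} (hr : r ≤ 1) : myLog r ≤ 0 := by
  unfold myLog; split_ifs with h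
  · exact bot_le
  · exact_mod_cast Real.log_nonpos (not_le.1 h).le hr

lemma myLog_lt_coe_iff {r s : ℝ} : myLog r < s ↔ r < Real.exp s := by
  unfold myLog; split_ifs with h
  · simpa using h.trans_lt (Real.exp_pos s)
  · rw [EReal.coe_lt_coe_iff, Real.log_lt_iff_lt_exp (not_le.1 h)]

section Semicontinuous

variable {X β : Type*} [TopologicalSpace X] [CompleteLinearOrder β] {f : X → β}

lemma UpperSemicontinuous.exists_iSup_eq [CompactSpace X] [Nonempty X]
    (hf : UpperSemicontinuous f) : ∃ x₀, ⨆ x, f x = f x₀ := by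
  obtain ⟨x₀, -, hx₀⟩ :=
    (hf.upperSemicontinuousOn univ).exists_isMaxOn univ_nonempty isCompact_univ
  exact ⟨x₀, le_antisymm (iSup_le fun x => hx₀ (mem_univ x)) (le_iSup f x₀)⟩

lemma UpperSemicontinuous.biSup_lt_of_isCompact {K : Set X} {t : β}
    (hf : UpperSemicontinuous f) (hK : IsCompact K) (ht : ⊥ < t) (hlt : ∀ x ∈ K, f x < t) :
    ⨆ x ∈ K, f x < t := by
  rcases K.eq_empty_or_nonempty with rfl | hne
  · simpa using ht
  obtain ⟨x₀, hx₀K, hx₀⟩ := (hf.upperSemicontinuousOn K).exists_isMaxOn hne hK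
  exact (iSup₂_le fun x hx => hx₀ hx : ⨆ x ∈ K, f x ≤ f x₀).trans_lt (hlt x₀ hx₀K)

end Semicontinuous

namespace IsPossibilityCapacity

variable {X : Type*} [TopologicalSpace X] {c : Set X → ℝ}

/-- Around each point of `K`, regularity gives a closed neighbourhood of capacity `< a`; the union
axiom glues finitely many of them. -/
lemma lt_of_forall_singleton_lt [T3Space X] (hc : IsPossibilityCapacity c) {K : Set X}
    (hK : IsCompact K) (hKc : IsClosed K) {a : ℝ} (ha : 0 < a) (hlt : ∀ x ∈ K, c {x} < a) :
    c K < a := by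
  obtain ⟨⟨-, hempty, -, hmono, husc⟩, hunion⟩ := hc
  obtain ⟨B, hBc, hKB, hBa⟩ : ∃ B, IsClosed B ∧ K ⊆ B ∧ c B < a := by
    refine hK.induction_on ?_ ?_ ?_ ?_
    · exact ⟨∅, isClosed_empty, subset_rfl, hempty ▸ ha⟩
    · rintro S T hST ⟨B, hB, hTB, hBa⟩
      exact ⟨B, hB, hST.trans hTB, hBa⟩
    · rintro S T ⟨B, hB, hSB, hBa⟩ ⟨B', hB', hTB', hB'a⟩
      exact ⟨B ∪ B', hB.union hB', union_subset_union hSB hTB',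
        (hunion B B' hB hB').trans_lt (max_lt hBa hB'a)⟩
    · intro x hx
      obtain ⟨O, hO, hxO, hOa⟩ := husc {x} a isClosed_singleton (hlt x hx)
      obtain ⟨N, hN, hNc, hNO⟩ := exists_mem_nhds_isClosed_subset
        (hO.mem_nhds (singleton_subset_iff.1 hxO))
      exact ⟨N, mem_nhdsWithin_of_mem_nhds hN, N, hNc, subset_rfl, hOa N hNc hNO⟩
  exact (hmono K B hKc hBc hKB).trans_lt hBa

lemma iSup_myLog_singleton [CompactSpace X] [T2Space X] (hc : IsPossibilityCapacity c) :
    ⨆ x, myLog (c {x}) = 0 := by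
  refine le_antisymm (iSup_le fun x => myLog_nonpos (hc.1.2.2.1 {x} isClosed_singleton).2) ?_
  by_contra! h
  obtain ⟨r, hr, hr0⟩ := EReal.exists_between_coe_real h
  have hlt : ∀ x, c {x} < Real.exp r :=
    fun x => myLog_lt_coe_iff.1 ((le_iSup (fun x => myLog (c {x})) x).trans_lt hr)
  have := hc.lt_of_forall_singleton_lt isCompact_univ isClosed_univ (Real.exp_pos r)
    fun x _ => hlt x
  rw [hc.1.1, Real.one_lt_exp_iff] at this
  exact absurd (EReal.coe_lt_coe_iff.1 hr0) this.not_gt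

end IsPossibilityCapacity

lemma isIdempotentMeasure_of_coe_eq_iSup {X : Type*} [TopologicalSpace X] {ν : C(X, ℝ) → ℝ}
    {L : X → EReal} (hL : ⨆ x, L x = 0) (hrep : ∀ φ, (ν φ : EReal) = ⨆ x, (φ x : EReal) + L x) :
    IsIdempotentMeasure ν := by
  have coe_max (a b : ℝ) : ((max a b : ℝ) : EReal) = max (a : EReal) b :=
    EReal.coe_strictMono.monotone.map_max
  refine ⟨?_, fun l φ => ?_, fun ψ φ => ?_⟩
  · have : (ν 1 : EReal) = (1 : ℝ) := by
      rw [hrep, ← add_zero ((1 : ℝ) : EReal), ← hL, EReal.coe_add_iSup]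
      rfl
    exact_mod_cast this
  · have : (ν (ContinuousMap.const X l + φ) : EReal) = (l + ν φ : ℝ) := by
      simp only [hrep, ContinuousMap.add_apply, ContinuousMap.const_apply, EReal.coe_add, add_assoc,
        EReal.coe_add_iSup]
    exact_mod_cast this
  · have : (ν (ψ ⊔ φ) : EReal) = (max (ν ψ) (ν φ) : ℝ) := by
      simp only [hrep, ContinuousMap.sup_apply, coe_max, ← max_add_add_right]
      exact iSup_sup_eq
    exact_mod_cast this

/-- `idempotentDensity ν x = inf {ν ψ | ψ x = 0}`, written with the constraint absorbed by
translation invariance; it is the logarithm of the possibility distribution of `ν`. -/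
noncomputable def idempotentDensity {X : Type*} [TopologicalSpace X] (ν : C(X, ℝ) → ℝ) (x : X) :
    EReal :=
  ⨅ ψ : C(X, ℝ), ((ν ψ - ψ x : ℝ) : EReal)

section Density

variable {X : Type*} [TopologicalSpace X] (ν : C(X, ℝ) → ℝ)

lemma coe_add_idempotentDensity (φ : C(X, ℝ)) (x : X) :
    (φ x : EReal) + idempotentDensity ν x = ⨅ ψ : C(X, ℝ), ((φ x + (ν ψ - ψ x) : ℝ) : EReal) := by
  simp only [idempotentDensity, EReal.coe_add_iInf, EReal.coe_add]

lemma coe_add_idempotentDensity_le (φ : C(X, ℝ)) (x : X) :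
    (φ x : EReal) + idempotentDensity ν x ≤ ν φ := by
  rw [coe_add_idempotentDensity]
  exact (iInf_le _ φ).trans (by simp)

lemma upperSemicontinuous_idempotentDensity : UpperSemicontinuous (idempotentDensity ν) :=
  upperSemicontinuous_iInf fun ψ =>
    (continuous_coe_real_ereal.comp (continuous_const.sub ψ.continuous)).upperSemicontinuous

lemma upperSemicontinuous_coe_add_idempotentDensity (φ : C(X, ℝ)) :
    UpperSemicontinuous fun x => (φ x : EReal) + idempotentDensity ν x := by
  simp only [coe_add_idempotentDensity]
  exact upperSemicontinuous_iInf fun ψ => (continuous_coe_real_ereal.comp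
    (φ.continuous.add (continuous_const.sub ψ.continuous))).upperSemicontinuous

end Density

namespace IsIdempotentMeasure

variable {X : Type*} [TopologicalSpace X] {ν : C(X, ℝ) → ℝ}

lemma map_zero (hν : IsIdempotentMeasure ν) : ν 0 = 0 := by
  have h := hν.2.1 1 0
  rw [show ContinuousMap.const X (1 : ℝ) + 0 = (1 : C(X, ℝ)) by ext; simp, hν.1] at h
  linarith

lemma map_const (hν : IsIdempotentMeasure ν) (r : ℝ) : ν (ContinuousMap.const X r) = r := by
  simpa [hν.map_zero] using hν.2.1 r 0

lemma monotone (hν : IsIdempotentMeasure ν) : Monotone ν := fun φ ψ h => by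
  rw [← sup_eq_right.2 h, hν.2.2]
  exact le_max_left _ _

lemma nonempty (hν : IsIdempotentMeasure ν) : Nonempty X := by
  by_contra h
  have : (0 : C(X, ℝ)) = 1 := ContinuousMap.ext fun x => (h ⟨x⟩).elim
  simpa [this, hν.1] using hν.map_zero

lemma le_of_forall_exists_lt [CompactSpace X] (hν : IsIdempotentMeasure ν) {φ : C(X, ℝ)} {r : ℝ}
    (h : ∀ x, ∃ χ : C(X, ℝ), φ x < χ x ∧ ν χ ≤ r) : ν φ ≤ r := by
  obtain ⟨ψ, hψr, hφψ⟩ : ∃ ψ : C(X, ℝ), ν ψ ≤ r ∧ ∀ y ∈ univ, φ y ≤ ψ y := by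
    refine isCompact_univ.induction_on ?_ ?_ ?_ ?_
    · exact ⟨ContinuousMap.const X r, (hν.map_const r).le, fun _ h => h.elim⟩
    · rintro S T hST ⟨ψ, hψ, hTψ⟩
      exact ⟨ψ, hψ, fun y hy => hTψ y (hST hy)⟩
    · rintro S T ⟨ψ, hψ, hSψ⟩ ⟨ψ', hψ', hTψ'⟩
      refine ⟨ψ ⊔ ψ', (hν.2.2 ψ ψ').trans_le (max_le hψ hψ'), ?_⟩
      rintro y (hy | hy)
      exacts [(hSψ y hy).trans le_sup_left, (hTψ' y hy).trans le_sup_right]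
    · intro x _
      obtain ⟨χ, hχx, hχr⟩ := h x
      exact ⟨{y | φ y < χ y}, mem_nhdsWithin_of_mem_nhds
        ((isOpen_lt φ.continuous χ.continuous).mem_nhds hχx), χ, hχr, fun y hy => le_of_lt hy⟩
  exact (hν.monotone fun y => hφψ y (mem_univ y)).trans hψr

lemma idempotentDensity_le_zero (hν : IsIdempotentMeasure ν) (x : X) :
    idempotentDensity ν x ≤ 0 :=
  (iInf_le _ 0).trans (by simp [hν.map_zero])

lemma coe_eq_iSup_add_idempotentDensity [CompactSpace X] (hν : IsIdempotentMeasure ν)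
    (φ : C(X, ℝ)) : (ν φ : EReal) = ⨆ x, (φ x : EReal) + idempotentDensity ν x := by
  refine le_antisymm ?_ (iSup_le (coe_add_idempotentDensity_le ν φ))
  by_contra! hlt
  obtain ⟨r, hr, hrν⟩ := EReal.exists_between_coe_real hlt
  refine (hν.le_of_forall_exists_lt fun x => ?_).not_gt (EReal.coe_lt_coe_iff.1 hrν)
  have hx := (le_iSup (fun x => (φ x : EReal) + idempotentDensity ν x) x).trans_lt hr
  rw [coe_add_idempotentDensity, iInf_lt_iff] at hx
  obtain ⟨ψ, hψ⟩ := hx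
  -- shift `ψ` so that it has measure exactly `r`
  refine ⟨ContinuousMap.const X (r - ν ψ) + ψ, ?_, (hν.2.1 _ ψ).le.trans (by linarith)⟩
  simp only [ContinuousMap.add_apply, ContinuousMap.const_apply]
  linarith [EReal.coe_lt_coe_iff.1 hψ]

lemma exists_iSup_add_idempotentDensity_eq [CompactSpace X] (hν : IsIdempotentMeasure ν)
    (φ : C(X, ℝ)) :
    ∃ x₀, ⨆ x, (φ x : EReal) + idempotentDensity ν x = φ x₀ + idempotentDensity ν x₀ :=
  haveI := hν.nonempty
  (upperSemicontinuous_coe_add_idempotentDensity ν φ).exists_iSup_eq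

lemma iSup_idempotentDensity [CompactSpace X] (hν : IsIdempotentMeasure ν) :
    ⨆ x, idempotentDensity ν x = 0 := by
  simpa [hν.map_zero] using (hν.coe_eq_iSup_add_idempotentDensity 0).symm

end IsIdempotentMeasure

noncomputable def idempotentCapacity {X : Type*} [TopologicalSpace X] (ν : C(X, ℝ) → ℝ)
    (F : Set X) : ℝ :=
  myExp (⨆ x ∈ F, idempotentDensity ν x)

namespace IsIdempotentMeasure

variable {X : Type*} [TopologicalSpace X] {ν : C(X, ℝ) → ℝ}

lemma biSup_idempotentDensity_le_zero (hν : IsIdempotentMeasure ν) (F : Set X) :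
    ⨆ x ∈ F, idempotentDensity ν x ≤ 0 :=
  iSup₂_le fun x _ => hν.idempotentDensity_le_zero x

lemma myLog_idempotentCapacity_singleton (hν : IsIdempotentMeasure ν) (x : X) :
    myLog (idempotentCapacity ν {x}) = idempotentDensity ν x := by
  rw [idempotentCapacity, iSup_singleton, myLog_myExp (hν.idempotentDensity_le_zero x)]

lemma exists_isOpen_idempotentCapacity_lt [CompactSpace X] (hν : IsIdempotentMeasure ν)
    {F : Set X} {a : ℝ} (ha : idempotentCapacity ν F < a) :
    ∃ O, IsOpen O ∧ F ⊆ O ∧ ∀ B, IsClosed B → B ⊆ O → idempotentCapacity ν B < a := by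
  have ha0 : 0 < a := (myExp_nonneg _).trans_lt ha
  have hd := upperSemicontinuous_idempotentDensity ν
  rw [idempotentCapacity, myExp_lt_iff (hν.biSup_idempotentDensity_le_zero F) ha0] at ha
  refine ⟨idempotentDensity ν ⁻¹' Iio (Real.log a), hd.isOpen_preimage _,
    fun x hx => (le_biSup _ hx).trans_lt ha, fun B hB hBO => ?_⟩
  rw [idempotentCapacity, myExp_lt_iff (hν.biSup_idempotentDensity_le_zero B) ha0]
  exact hd.biSup_lt_of_isCompact hB.isCompact (EReal.bot_lt_coe _) hBO

lemma isPossibilityCapacity_idempotentCapacity [CompactSpace X] (hν : IsIdempotentMeasure ν) :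
    IsPossibilityCapacity (idempotentCapacity ν) := by
  have hle := hν.biSup_idempotentDensity_le_zero
  refine ⟨⟨?_, ?_, fun F _ => ⟨myExp_nonneg _, myExp_le_one (hle F)⟩,
    fun F G _ _ hFG => monotoneOn_myExp (hle F) (hle G) (biSup_mono fun _ hx => hFG hx),
    fun F a _ => hν.exists_isOpen_idempotentCapacity_lt⟩, fun A B _ _ => ?_⟩
  · rw [idempotentCapacity, iSup_univ, hν.iSup_idempotentDensity, myExp_zero]
  · rw [idempotentCapacity, iSup_emptyset, myExp_bot]
  · rw [idempotentCapacity, iSup_union]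
    exact monotoneOn_myExp.map_max (hle A) (hle B)

end IsIdempotentMeasure

/-- A functional `ν : C(X) → ℝ` on a compactum `X` is an idempotent
measure if and only if there is a possibility capacity `c` on `X` such that
`ν(φ) = max{φ(x) + ln c({x}) : x ∈ X}` for every `φ ∈ C(X)` (computed in
`ℝ ∪ {-∞}` with `ln(0) = -∞`; the maximum is attained and finite). -/
theorem stmt17 {X : Type*} [TopologicalSpace X] [CompactSpace X] [T2Space X]
    (ν : C(X, ℝ) → ℝ) :
    IsIdempotentMeasure ν ↔
      ∃ c : Set X → ℝ, IsPossibilityCapacity c ∧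
        ∀ φ : C(X, ℝ),
          ((ν φ : ℝ) : EReal) = (⨆ x : X, ((φ x : EReal) + myLog (c {x}))) ∧
          ∃ x₀ : X, (⨆ x : X, ((φ x : EReal) + myLog (c {x}))) =
              (φ x₀ : EReal) + myLog (c {x₀}) := by
  constructor
  · intro hν
    refine ⟨idempotentCapacity ν, hν.isPossibilityCapacity_idempotentCapacity, fun φ => ?_⟩
    simp only [hν.myLog_idempotentCapacity_singleton]
    exact ⟨hν.coe_eq_iSup_add_idempotentDensity φ, hν.exists_iSup_add_idempotentDensity_eq φ⟩
  · rintro ⟨c, hc, hrep⟩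
    exact isIdempotentMeasure_of_coe_eq_iSup hc.iSup_myLog_singleton fun φ => (hrep φ).1
end

section
/- Let T be a set and let K ⊆ ℝ^T be a compact max-plus convex subset. Then the pair (K, β_K) is an I-algebra: β_K ∘ ηK = id_K and β_K ∘ μK = β_K ∘ I(β_K) as maps I(IK) → K. -/
/-- The space `IX` of idempotent measures, topologized as a subspace of `ℝ^{C(X)}`. -/
abbrev IspX (X : Type*) [TopologicalSpace X] := {μ : C(X, ℝ) → ℝ // IsIdempotentMeasure μ}
/-- For `φ ∈ C(X)`, the evaluation `π_φ : IX → ℝ`, `π_φ(ν) = ν(φ)`,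
as a continuous map. -/
noncomputable def piEval {X : Type*} [TopologicalSpace X] (φ : C(X, ℝ)) :
    C(IspX X, ℝ) :=
  ⟨fun μ => μ.1 φ, (continuous_apply φ).comp continuous_subtype_val⟩
/-- A subset `K ⊆ ℝ^T` is max-plus convex if for all `a, b ∈ K` and
`λ ∈ [-∞, 0]`, the coordinatewise maximum `(λ + a) ∨ b` belongs to `K`
(with `-∞ + x = -∞` and `max(-∞, x) = x`). -/
def MaxPlusConvexSet {T : Type*} (K : Set (T → ℝ)) : Prop :=
  ∀ a ∈ K, ∀ b ∈ K, ∀ l : EReal, l ≤ 0 →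
    ∃ c ∈ K, ∀ t : T, (c t : EReal) = (l + (a t : EReal)) ⊔ (b t : EReal)

/-- For `t ∈ T`, the coordinate projection `f_t = pr_t|_K ∈ C(K)`. -/
noncomputable def coordMap {T : Type*} (K : Set (T → ℝ)) (t : T) : C(↥K, ℝ) :=
  ⟨fun k => (k : T → ℝ) t, (continuous_apply t).comp continuous_subtype_val⟩

/-- Let `K ⊆ ℝ^T` be a compact max-plus convex subset and let
`β_K : IK → K` be the (continuous) idempotent barycenter map, determined by
`pr_t(β_K(ν)) = ν(f_t)` for all `t`.  Then `(K, β_K)` is an `I`-algebra: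
`β_K ∘ ηK = id_K` (where `ηK(k)(φ) = φ(k)` is the Dirac measure at `k`) and
`β_K ∘ μK = β_K ∘ I(β_K)` on `I(IK)` (where `μK(N)(φ) = N(π_φ)` and
`I(β_K)(N)(φ) = N(φ ∘ β_K)`). -/
theorem stmt18 {T : Type*} (K : Set (T → ℝ)) (hK : IsCompact K)
    (hKconv : MaxPlusConvexSet K)
    (β : C(IspX ↥K, ↥K))
    (hβ : ∀ (ν : IspX ↥K) (t : T), ((β ν : ↥K) : T → ℝ) t = ν.1 (coordMap K t)) :
    (∀ (k : ↥K) (h : IsIdempotentMeasure fun φ : C(↥K, ℝ) => φ k),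
        β ⟨fun φ : C(↥K, ℝ) => φ k, h⟩ = k) ∧
    (∀ N : C(IspX ↥K, ℝ) → ℝ, IsIdempotentMeasure N →
      ∀ (h₁ : IsIdempotentMeasure fun φ : C(↥K, ℝ) => N (piEval φ))
        (h₂ : IsIdempotentMeasure fun φ : C(↥K, ℝ) => N (φ.comp β)),
        β ⟨fun φ : C(↥K, ℝ) => N (piEval φ), h₁⟩ =
          β ⟨fun φ : C(↥K, ℝ) => N (φ.comp β), h₂⟩) := by
  constructor
  · intro k h
    apply Subtype.ext
    funext t
    rw [hβ]
    rfl
  · intro N hN h₁ h₂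
    apply Subtype.ext
    funext t
    rw [hβ, hβ]
    have : piEval (coordMap K t) = (coordMap K t).comp β := by
      ext ν
      simp only [piEval, ContinuousMap.comp_apply, ContinuousMap.coe_mk]
      exact (hβ ν t).symm
    simp only [this]
end
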